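/- arXiv:2110.05105 — 2 statements merged into one kernel-verified Lean document; each statement's English description precedes it below -/
import Mathlib

section
/- Let Ω ⊂ ℝ^N (N ≥ 2) be a bounded open set and let A, M satisfy the ellipticity conditions with constants 0 < α ≤ β. Let γ ∈ (0,1] and r ≥ 1. Then the energy solution of the singular Schrödinger–Maxwell system is unique: if (u₁,v₁) and (u₂,v₂) are both energy solutions, then u₁ = u₂ and v₁ = v₂ almost everywhere in Ω. -/
open scoped ENNReal NNReal

open MeasureTheory Filter Topology Set

noncomputable section

/-- A smooth test function with compact support contained in `Ω`. -/
def IsSmoothTest {N : ℕ} (Ω : Set (Fin N → ℝ)) (φ : (Fin N → ℝ) → ℝ) : Prop :=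
  ContDiff ℝ (⊤ : ℕ∞) φ ∧ HasCompactSupport φ ∧ tsupport φ ⊆ Ω

/-- `gu` is the weak gradient of `u` on `Ω`, both being square integrable on `Ω`. -/
def HasWeakGrad {N : ℕ} (Ω : Set (Fin N → ℝ)) (u : (Fin N → ℝ) → ℝ)
    (gu : (Fin N → ℝ) → Fin N → ℝ) : Prop :=
  MemLp u 2 (volume.restrict Ω) ∧
  (∀ i, MemLp (fun x => gu x i) 2 (volume.restrict Ω)) ∧
  ∀ φ : (Fin N → ℝ) → ℝ, IsSmoothTest Ω φ → ∀ i,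
    ∫ x in Ω, u x * fderiv ℝ φ x (Pi.single i 1) = - ∫ x in Ω, gu x i * φ x

/-- Membership in `W^{1,2}_0(Ω)`, with explicit weak gradient `gu`:
`u` has weak gradient `gu` and is approximable by smooth compactly supported
functions in the `W^{1,2}` norm. -/
def MemW120 {N : ℕ} (Ω : Set (Fin N → ℝ)) (u : (Fin N → ℝ) → ℝ)
    (gu : (Fin N → ℝ) → Fin N → ℝ) : Prop :=
  HasWeakGrad Ω u gu ∧
  ∃ φ : ℕ → (Fin N → ℝ) → ℝ, (∀ k, IsSmoothTest Ω (φ k)) ∧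
    Tendsto (fun k => eLpNorm (fun x => φ k x - u x) 2 (volume.restrict Ω)) atTop (𝓝 0) ∧
    ∀ i, Tendsto (fun k => eLpNorm
      (fun x => fderiv ℝ (φ k) x (Pi.single i 1) - gu x i) 2 (volume.restrict Ω)) atTop (𝓝 0)

/-- The matrix field `A` is measurable, bounded and elliptic on `Ω`:
`α|ξ|² ≤ A(x)ξ·ξ ≤ β|ξ|²` for a.e. `x ∈ Ω` and all `ξ`. -/
def Elliptic {N : ℕ} (Ω : Set (Fin N → ℝ)) (A : (Fin N → ℝ) → Matrix (Fin N) (Fin N) ℝ)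
    (α β : ℝ) : Prop :=
  (∀ i j, Measurable fun x => A x i j) ∧
  ∀ᵐ x ∂(volume.restrict Ω), ∀ ξ : Fin N → ℝ,
    α * ∑ i, ξ i ^ 2 ≤ ∑ i, ∑ j, A x i j * ξ i * ξ j ∧
    ∑ i, ∑ j, A x i j * ξ i * ξ j ≤ β * ∑ i, ξ i ^ 2

/-- `(u,v)` (with weak gradients `gu, gv`) is an energy solution of the singular
Schrödinger–Maxwell system `-div(A∇u) + v u^{r-1} = u^{-γ}`, `-div(M∇v) = u^r`. -/
def IsEnergySolution {N : ℕ} (Ω : Set (Fin N → ℝ))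
    (A M : (Fin N → ℝ) → Matrix (Fin N) (Fin N) ℝ) (γ r : ℝ)
    (u : (Fin N → ℝ) → ℝ) (gu : (Fin N → ℝ) → Fin N → ℝ)
    (v : (Fin N → ℝ) → ℝ) (gv : (Fin N → ℝ) → Fin N → ℝ) : Prop :=
  MemW120 Ω u gu ∧ MemW120 Ω v gv ∧
  MemLp u ⊤ (volume.restrict Ω) ∧ MemLp v ⊤ (volume.restrict Ω) ∧
  (∀ᵐ x ∂(volume.restrict Ω), 0 < u x) ∧
  (∀ᵐ x ∂(volume.restrict Ω), 0 < v x) ∧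
  (∀ φ gφ, MemW120 Ω φ gφ →
    Integrable (fun x => φ x / u x ^ γ) (volume.restrict Ω)) ∧
  (∀ φ gφ, MemW120 Ω φ gφ →
    (∫ x in Ω, ∑ i, ∑ j, A x i j * gu x j * gφ x i) +
      (∫ x in Ω, v x * u x ^ (r - 1) * φ x) = ∫ x in Ω, φ x / u x ^ γ) ∧
  (∀ ψ gψ, MemW120 Ω ψ gψ →
    (∫ x in Ω, ∑ i, ∑ j, M x i j * gv x j * gψ x i) = ∫ x in Ω, u x ^ r * ψ x)



section Helpers

-- D1
lemma sing_mono {a b g : ℝ} (ha : 0 < a) (hb : 0 < b) (hg : 0 < g) :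
    (a - b) / a ^ g - (a - b) / b ^ g ≤ 0 := by
  have hag : (0:ℝ) < a ^ g := Real.rpow_pos_of_pos ha g
  have hbg : (0:ℝ) < b ^ g := Real.rpow_pos_of_pos hb g
  rw [div_sub_div _ _ hag.ne' hbg.ne', div_nonpos_iff]
  right
  constructor
  · rcases le_total a b with h | h
    · have : a ^ g ≤ b ^ g := Real.rpow_le_rpow ha.le h hg.le
      nlinarith
    · have : b ^ g ≤ a ^ g := Real.rpow_le_rpow hb.le h hg.le
      nlinarith
  · positivity

-- D2a
lemma rpow_sub_rpow_le {a b r : ℝ} (ha : 0 < a) (hb : 0 < b) (hr : 1 ≤ r) :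
    a ^ r - b ^ r ≤ r * a ^ (r - 1) * (a - b) := by
  have ht : (0:ℝ) < b / a := div_pos hb ha
  have key : 1 + r * (b / a - 1) ≤ (b / a) ^ r := by
    have := one_add_mul_self_le_rpow_one_add (s := b / a - 1) (by linarith) hr
    simpa using this
  have har : (0:ℝ) < a ^ r := Real.rpow_pos_of_pos ha r
  have hmul : a ^ r * (1 + r * (b / a - 1)) ≤ a ^ r * (b / a) ^ r :=
    mul_le_mul_of_nonneg_left key har.le
  have hbr : a ^ r * (b / a) ^ r = b ^ r := by
    rw [← Real.mul_rpow ha.le ht.le, mul_div_cancel₀ _ ha.ne']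
  have hsub : a ^ (r - 1) = a ^ r / a := by
    rw [Real.rpow_sub ha, Real.rpow_one]
  rw [hbr] at hmul
  have : a ^ r * (1 + r * (b / a - 1)) = a ^ r + r * (a ^ r / a) * (b - a) := by
    field_simp
  rw [this] at hmul
  rw [hsub]
  nlinarith
-- D2
lemma key_ineq {a b r v1 v2 : ℝ} (ha : 0 < a) (hb : 0 < b) (hr : 1 ≤ r)
    (hv1 : 0 ≤ v1) (hv2 : 0 ≤ v2) :
    1 / r * ((v1 - v2) * (a ^ r - b ^ r)) ≤
      v1 * a ^ (r - 1) * (a - b) - v2 * b ^ (r - 1) * (a - b) := by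
  have hr0 : (0:ℝ) < r := by linarith
  have h1 : a ^ r - b ^ r ≤ r * a ^ (r - 1) * (a - b) := rpow_sub_rpow_le ha hb hr
  have h2 : b ^ r - a ^ r ≤ r * b ^ (r - 1) * (b - a) := rpow_sub_rpow_le hb ha hr
  have e1 : 0 ≤ v1 * (r * a ^ (r - 1) * (a - b) - (a ^ r - b ^ r)) :=
    mul_nonneg hv1 (by linarith)
  have e2 : 0 ≤ v2 * (r * b ^ (r - 1) * (b - a) - (b ^ r - a ^ r)) :=
    mul_nonneg hv2 (by linarith)
  rw [div_mul_eq_mul_div, div_le_iff₀ hr0]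
  nlinarith

lemma opNorm_le_sum_components {N : ℕ} (L : (Fin N → ℝ) →L[ℝ] ℝ) :
    ‖L‖ ≤ ∑ i, ‖L (Pi.single i 1)‖ := by
  refine L.opNorm_le_bound (by positivity) (fun ξ => ?_)
  have hξ : ξ = ∑ i, ξ i • (Pi.single i (1:ℝ) : Fin N → ℝ) := by
    conv_lhs => rw [← Finset.univ_sum_single ξ]
    refine Finset.sum_congr rfl fun i _ => ?_
    ext j
    simp [Pi.single_apply]
  calc ‖L ξ‖ = ‖∑ i, ξ i * L (Pi.single i 1)‖ := by
        conv_lhs => rw [hξ]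
        rw [map_sum]
        simp [smul_eq_mul]
      _ ≤ ∑ i, ‖ξ i * L (Pi.single i 1)‖ := norm_sum_le _ _
      _ ≤ ∑ i, ‖L (Pi.single i 1)‖ * ‖ξ‖ := by
        refine Finset.sum_le_sum fun i _ => ?_
        rw [norm_mul, mul_comm]
        exact mul_le_mul_of_nonneg_left (norm_le_pi_norm ξ i) (norm_nonneg _)
      _ = (∑ i, ‖L (Pi.single i 1)‖) * ‖ξ‖ := by rw [← Finset.sum_mul]

variable {X : Type*} [MeasurableSpace X] {μ : Measure X}

lemma memℒp_top_ae_bound {f : X → ℝ} (hf : MemLp f ⊤ μ) :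
    ∃ C : ℝ, 0 ≤ C ∧ ∀ᵐ x ∂μ, |f x| ≤ C := by
  refine ⟨(eLpNormEssSup f μ).toReal, ENNReal.toReal_nonneg, ?_⟩
  have hS : eLpNormEssSup f μ ≠ ⊤ := by
    have := hf.2
    rwa [eLpNorm_exponent_top, lt_top_iff_ne_top] at this
  filter_upwards [ae_le_eLpNormEssSup (f := f) (μ := μ)] with x hx
  have : ((‖f x‖₊ : ℝ≥0∞)).toReal ≤ (eLpNormEssSup f μ).toReal :=
    ENNReal.toReal_mono hS hx
  simpa [Real.norm_eq_abs] using this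
lemma memℒp_top_mul {f g : X → ℝ} (hf : MemLp f ⊤ μ) (hg : MemLp g ⊤ μ) :
    MemLp (fun x => f x * g x) ⊤ μ := by
  obtain ⟨Cf, hCf0, hCf⟩ := memℒp_top_ae_bound hf
  obtain ⟨Cg, hCg0, hCg⟩ := memℒp_top_ae_bound hg
  refine memLp_top_of_bound (hf.aestronglyMeasurable.mul hg.aestronglyMeasurable) (Cf * Cg) ?_
  filter_upwards [hCf, hCg] with x h1 h2
  rw [Real.norm_eq_abs, abs_mul]
  exact mul_le_mul h1 h2 (abs_nonneg _) hCf0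

lemma memℒp_top_rpow {f : X → ℝ} {s : ℝ} (hs : 0 ≤ s) (hf : MemLp f ⊤ μ)
    (hpos : ∀ᵐ x ∂μ, 0 < f x) : MemLp (fun x => f x ^ s) ⊤ μ := by
  obtain ⟨C, hC0, hC⟩ := memℒp_top_ae_bound hf
  have hmeas : AEStronglyMeasurable (fun x => f x ^ s) μ :=
    (Real.continuous_rpow_const hs).comp_aestronglyMeasurable hf.aestronglyMeasurable
  refine memLp_top_of_bound hmeas (C ^ s) ?_
  filter_upwards [hC, hpos] with x h1 h2
  rw [Real.norm_eq_abs, abs_of_nonneg (Real.rpow_nonneg h2.le s)]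
  exact Real.rpow_le_rpow h2.le ((le_abs_self _).trans h1) hs

lemma memℒp_top_sub {f g : X → ℝ} (hf : MemLp f ⊤ μ) (hg : MemLp g ⊤ μ) :
    MemLp (fun x => f x - g x) ⊤ μ := hf.sub hg

lemma isFiniteMeasure_restrict_of_isBounded {N : ℕ} {Ω : Set (Fin N → ℝ)}
    (hΩb : Bornology.IsBounded Ω) : IsFiniteMeasure (volume.restrict Ω) :=
  ⟨by rw [Measure.restrict_apply_univ]; exact hΩb.measure_lt_top⟩

lemma IsSmoothTest.sub {N : ℕ} {Ω : Set (Fin N → ℝ)} {φ ψ : (Fin N → ℝ) → ℝ}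
    (hφ : IsSmoothTest Ω φ) (hψ : IsSmoothTest Ω ψ) : IsSmoothTest Ω (fun x => φ x - ψ x) := by
  have hts : tsupport (fun x => φ x - ψ x) ⊆ tsupport φ ∪ tsupport ψ := by
    refine (closure_minimal ?_ ((isClosed_tsupport φ).union (isClosed_tsupport ψ)))
    intro x hx
    simp only [Function.mem_support, ne_eq] at hx
    by_cases h1 : φ x = 0
    · have : ψ x ≠ 0 := fun h => hx (by rw [h1, h, sub_zero])
      exact Or.inr (subset_tsupport _ this)
    · exact Or.inl (subset_tsupport _ h1)
  refine ⟨hφ.1.sub hψ.1, ?_, hts.trans (union_subset hφ.2.2 hψ.2.2)⟩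
  exact IsCompact.of_isClosed_subset (hφ.2.1.union hψ.2.1) (isClosed_tsupport _) hts

lemma MemW120.sub {N : ℕ} {Ω : Set (Fin N → ℝ)} (hΩb : Bornology.IsBounded Ω)
    {u₁ u₂ : (Fin N → ℝ) → ℝ} {g₁ g₂ : (Fin N → ℝ) → Fin N → ℝ}
    (h₁ : MemW120 Ω u₁ g₁) (h₂ : MemW120 Ω u₂ g₂) :
    MemW120 Ω (fun x => u₁ x - u₂ x) (fun x i => g₁ x i - g₂ x i) := by
  haveI := isFiniteMeasure_restrict_of_isBounded hΩb
  obtain ⟨⟨hu1, hg1, hw1⟩, φ1, hφ1, hc1, hgc1⟩ := h₁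
  obtain ⟨⟨hu2, hg2, hw2⟩, φ2, hφ2, hc2, hgc2⟩ := h₂
  set μ := volume.restrict Ω
  constructor
  · refine ⟨hu1.sub hu2, fun i => (hg1 i).sub (hg2 i), ?_⟩
    intro φ hφ i
    set D := fun x => fderiv ℝ φ x (Pi.single i 1) with hD
    have hDcont : Continuous D :=
      ((hφ.1.fderiv_right (m := (⊤ : ℕ∞)) (by simp)).continuous).clm_apply continuous_const
    have hDcs : HasCompactSupport D := by
      have h0 : (fun L : (Fin N → ℝ) →L[ℝ] ℝ => L (Pi.single i 1)) 0 = 0 := rfl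
      exact (hφ.2.1.fderiv ℝ).comp_left (g := fun L : (Fin N → ℝ) →L[ℝ] ℝ =>
        L (Pi.single i 1)) h0
    have hDbdd : ∃ CD, ∀ x, ‖D x‖ ≤ CD := hDcs.exists_bound_of_continuous hDcont
    have hφbdd : ∃ Cφ, ∀ x, ‖φ x‖ ≤ Cφ := hφ.2.1.exists_bound_of_continuous hφ.1.continuous
    have hu1i : Integrable (fun x => u₁ x * D x) μ :=
      ((hu1.integrable one_le_two).bdd_mul hDcont.aestronglyMeasurable (Eventually.of_forall hDbdd.choose_spec)).congr
        (Eventually.of_forall fun x => mul_comm _ _)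
    have hu2i : Integrable (fun x => u₂ x * D x) μ :=
      ((hu2.integrable one_le_two).bdd_mul hDcont.aestronglyMeasurable (Eventually.of_forall hDbdd.choose_spec)).congr
        (Eventually.of_forall fun x => mul_comm _ _)
    have hg1i : Integrable (fun x => g₁ x i * φ x) μ :=
      (((hg1 i).integrable one_le_two).bdd_mul hφ.1.continuous.aestronglyMeasurable
        (Eventually.of_forall hφbdd.choose_spec)).congr (Eventually.of_forall fun x => mul_comm _ _)
    have hg2i : Integrable (fun x => g₂ x i * φ x) μ :=
      (((hg2 i).integrable one_le_two).bdd_mul hφ.1.continuous.aestronglyMeasurable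
        (Eventually.of_forall hφbdd.choose_spec)).congr (Eventually.of_forall fun x => mul_comm _ _)
    calc ∫ x in Ω, (u₁ x - u₂ x) * D x
        = ∫ x in Ω, (u₁ x * D x - u₂ x * D x) := by
          congr 1; funext x; ring
      _ = (∫ x in Ω, u₁ x * D x) - ∫ x in Ω, u₂ x * D x := integral_sub hu1i hu2i
      _ = (-∫ x in Ω, g₁ x i * φ x) - -∫ x in Ω, g₂ x i * φ x := by
          rw [hw1 φ hφ i, hw2 φ hφ i]
      _ = -((∫ x in Ω, g₁ x i * φ x) - ∫ x in Ω, g₂ x i * φ x) := by ring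
      _ = -∫ x in Ω, (g₁ x i * φ x - g₂ x i * φ x) := by rw [integral_sub hg1i hg2i]
      _ = -∫ x in Ω, (g₁ x i - g₂ x i) * φ x := by
          congr 1; apply integral_congr_ae; filter_upwards with x; ring
  · refine ⟨fun k x => φ1 k x - φ2 k x, fun k => (hφ1 k).sub (hφ2 k), ?_, ?_⟩
    · have key : ∀ k, eLpNorm (fun x => (φ1 k x - φ2 k x) - (u₁ x - u₂ x)) 2 μ ≤
          eLpNorm (fun x => φ1 k x - u₁ x) 2 μ + eLpNorm (fun x => φ2 k x - u₂ x) 2 μ := by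
        intro k
        have he : (fun x => (φ1 k x - φ2 k x) - (u₁ x - u₂ x))
            = (fun x => (φ1 k x - u₁ x) + (-(φ2 k x - u₂ x))) := by funext x; ring
        rw [he]
        have hneg : eLpNorm (fun x => -(φ2 k x - u₂ x)) 2 μ
            = eLpNorm (fun x => φ2 k x - u₂ x) 2 μ := by
          have : (fun x => -(φ2 k x - u₂ x)) = -(fun x => φ2 k x - u₂ x) := rfl
          rw [this, eLpNorm_neg]
        refine (eLpNorm_add_le ?_ ?_ (by norm_num)).trans (le_of_eq ?_)
        · exact ((hφ1 k).1.continuous.aestronglyMeasurable).sub hu1.aestronglyMeasurable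
        · exact (((hφ2 k).1.continuous.aestronglyMeasurable).sub hu2.aestronglyMeasurable).neg
        · rw [hneg]
      have htend : Tendsto (fun k => eLpNorm (fun x => φ1 k x - u₁ x) 2 μ +
          eLpNorm (fun x => φ2 k x - u₂ x) 2 μ) atTop (𝓝 0) := by
        have := Tendsto.add hc1 hc2
        simpa using this
      exact tendsto_of_tendsto_of_tendsto_of_le_of_le tendsto_const_nhds htend
        (fun k => zero_le) key
    · intro i
      have key : ∀ k, eLpNorm (fun x => fderiv ℝ (fun y => φ1 k y - φ2 k y) x (Pi.single i 1)
          - (g₁ x i - g₂ x i)) 2 μ ≤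
          eLpNorm (fun x => fderiv ℝ (φ1 k) x (Pi.single i 1) - g₁ x i) 2 μ +
          eLpNorm (fun x => fderiv ℝ (φ2 k) x (Pi.single i 1) - g₂ x i) 2 μ := by
        intro k
        have hdf : ∀ x, fderiv ℝ (fun y => φ1 k y - φ2 k y) x (Pi.single i 1)
            = fderiv ℝ (φ1 k) x (Pi.single i 1) - fderiv ℝ (φ2 k) x (Pi.single i 1) := by
          intro x
          rw [fderiv_fun_sub ((hφ1 k).1.differentiable (by simp) x)
            ((hφ2 k).1.differentiable (by simp) x)]
          rfl
        have he : (fun x => fderiv ℝ (fun y => φ1 k y - φ2 k y) x (Pi.single i 1)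
            - (g₁ x i - g₂ x i))
            = (fun x => (fderiv ℝ (φ1 k) x (Pi.single i 1) - g₁ x i)
              + (-(fderiv ℝ (φ2 k) x (Pi.single i 1) - g₂ x i))) := by
          funext x; rw [hdf x]; ring
        rw [he]
        have hc1' : Continuous fun x => fderiv ℝ (φ1 k) x (Pi.single i 1) :=
          (((hφ1 k).1.fderiv_right (m := (⊤ : ℕ∞)) (by simp)).continuous).clm_apply continuous_const
        have hc2' : Continuous fun x => fderiv ℝ (φ2 k) x (Pi.single i 1) :=
          (((hφ2 k).1.fderiv_right (m := (⊤ : ℕ∞)) (by simp)).continuous).clm_apply continuous_const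
        have hneg : eLpNorm (fun x => -(fderiv ℝ (φ2 k) x (Pi.single i 1) - g₂ x i)) 2 μ
            = eLpNorm (fun x => fderiv ℝ (φ2 k) x (Pi.single i 1) - g₂ x i) 2 μ := by
          have : (fun x => -(fderiv ℝ (φ2 k) x (Pi.single i 1) - g₂ x i))
              = -(fun x => fderiv ℝ (φ2 k) x (Pi.single i 1) - g₂ x i) := rfl
          rw [this, eLpNorm_neg]
        refine (eLpNorm_add_le ?_ ?_ (by norm_num)).trans (le_of_eq ?_)
        · exact hc1'.aestronglyMeasurable.sub (hg1 i).aestronglyMeasurable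
        · exact (hc2'.aestronglyMeasurable.sub (hg2 i).aestronglyMeasurable).neg
        · rw [hneg]
      have htend : Tendsto (fun k =>
          eLpNorm (fun x => fderiv ℝ (φ1 k) x (Pi.single i 1) - g₁ x i) 2 μ +
          eLpNorm (fun x => fderiv ℝ (φ2 k) x (Pi.single i 1) - g₂ x i) 2 μ) atTop (𝓝 0) := by
        have := Tendsto.add (hgc1 i) (hgc2 i)
        simpa using this
      exact tendsto_of_tendsto_of_tendsto_of_le_of_le tendsto_const_nhds htend
        (fun k => zero_le) key

lemma poincare_const {N : ℕ} (hN : 2 ≤ N) (Ω : Set (Fin N → ℝ))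
    (hΩb : Bornology.IsBounded Ω) :
    ∃ C : ℝ≥0∞, C ≠ ⊤ ∧ ∀ φ : (Fin N → ℝ) → ℝ, IsSmoothTest Ω φ →
      eLpNorm φ 2 (volume.restrict Ω)
        ≤ C * ∑ i, eLpNorm (fun x => fderiv ℝ φ x (Pi.single i 1)) 2 (volume.restrict Ω) := by
  have hN0 : 0 < (N:ℝ≥0) := by
    have : 0 < N := by omega
    exact_mod_cast this
  have hN0R : (0:ℝ) < N := by exact_mod_cast hN0
  set p : ℝ≥0 := 2 * N / (N + 2) with hp_def
  have hden : (0:ℝ≥0) < N + 2 := by positivity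
  have hp1 : 1 ≤ p := by
    rw [hp_def, one_le_div hden]
    calc (N:ℝ≥0) + 2 ≤ N + N := by
          have : (2:ℝ≥0) ≤ (N:ℝ≥0) := by exact_mod_cast hN
          gcongr
    _ = 2 * N := by ring
  have hp0 : 0 < p := lt_of_lt_of_le one_pos hp1
  have h2p : p < (N:ℝ≥0) := by
    rw [hp_def, div_lt_iff₀ hden]
    calc 2 * (N:ℝ≥0) < 2 * N + N * N := by
          have : (0:ℝ≥0) < N * N := by positivity
          exact lt_add_of_pos_right _ this
    _ = N * (N + 2) := by ring
  have hpR : (p:ℝ) = 2 * N / (N + 2) := by rw [hp_def]; push_cast; rfl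
  have hpposR : (0:ℝ) < (p:ℝ) := by exact_mod_cast hp0
  have hple2R : (p:ℝ) ≤ 2 := by
    rw [hpR, div_le_iff₀ (by positivity)]
    nlinarith
  have hptwo : (p:ℝ≥0∞) ≤ 2 := by
    have h : p ≤ 2 := by exact_mod_cast hple2R
    exact_mod_cast h
  have hpinv : ((p:ℝ))⁻¹ = (N + 2) / (2 * N) := by
    rw [hpR, inv_div]
  set C0 : ℝ≥0 := eLpNormLESNormFDerivOfLeConst ℝ (volume : Measure (Fin N → ℝ)) Ω p 2 with hC0
  set e : ℝ := 1 / (p:ℝ≥0∞).toReal - 1 / (2:ℝ≥0∞).toReal with he_def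
  have hpe : (p:ℝ≥0∞).toReal = (p:ℝ) := by simp
  have h2e : (2:ℝ≥0∞).toReal = (2:ℝ) := by simp
  have he0 : 0 ≤ e := by
    rw [he_def, hpe, h2e, sub_nonneg]
    exact one_div_le_one_div_of_le hpposR hple2R
  set C : ℝ≥0∞ := (C0 : ℝ≥0∞) * (volume Ω) ^ e with hC
  refine ⟨C, ?_, ?_⟩
  · exact ENNReal.mul_ne_top ENNReal.coe_ne_top
      (ENNReal.rpow_ne_top_of_nonneg he0 hΩb.measure_lt_top.ne)
  intro φ hφ
  obtain ⟨hsm, hcs, hsupp⟩ := hφ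
  have hsupp' : Function.support φ ⊆ Ω := (subset_tsupport φ).trans hsupp
  have hcd1 : ContDiff ℝ 1 φ := hsm.of_le (by simp)
  have hcfd : Continuous (fderiv ℝ φ) := (hsm.fderiv_right (m := (⊤ : ℕ∞)) (by simp)).continuous
  have key := eLpNorm_le_eLpNorm_fderiv_of_le (μ := (volume : Measure (Fin N → ℝ)))
      (F := ℝ) hcd1 hsupp' (p := p) (q := 2) hp1 ?_ ?_ hΩb
  rotate_left
  · rw [Module.finrank_fin_fun]; exact_mod_cast h2p
  · rw [Module.finrank_fin_fun]
    have h2inv : ((2:ℝ≥0):ℝ)⁻¹ = 1/2 := by norm_num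
    rw [h2inv, NNReal.coe_inv, hpinv]
    rw [inv_eq_one_div, div_sub_div _ _ (by positivity) hN0R.ne',
      div_le_div_iff₀ (by positivity) (by norm_num)]
    nlinarith
  -- main chain
  have hFi : ∀ i : Fin N, Continuous (fun x => fderiv ℝ φ x (Pi.single i 1)) := by
    intro i
    exact hcfd.clm_apply continuous_const
  have hsum_bound : eLpNorm (fderiv ℝ φ) 2 (volume.restrict Ω)
      ≤ ∑ i, eLpNorm (fun x => fderiv ℝ φ x (Pi.single i 1)) 2 (volume.restrict Ω) := by
    have h1 : ∀ x, ‖fderiv ℝ φ x‖ ≤ ‖∑ i, ‖fderiv ℝ φ x (Pi.single i 1)‖‖ := fun x =>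
      (opNorm_le_sum_components _).trans (le_abs_self _)
    refine (eLpNorm_mono h1).trans ?_
    have heq : (fun x => ∑ i, ‖fderiv ℝ φ x (Pi.single i 1)‖)
        = ∑ i : Fin N, (fun x => ‖fderiv ℝ φ x (Pi.single i 1)‖) := by
      funext x; simp [Finset.sum_apply]
    rw [heq]
    refine (eLpNorm_sum_le (fun i _ => ((hFi i).norm).aestronglyMeasurable) (by norm_num)).trans ?_
    refine le_of_eq (Finset.sum_congr rfl fun i _ => ?_)
    exact eLpNorm_norm _
  calc eLpNorm φ 2 (volume.restrict Ω) ≤ eLpNorm φ 2 volume :=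
        eLpNorm_mono_measure _ Measure.restrict_le_self
    _ = eLpNorm φ ((2:ℝ≥0) : ℝ≥0∞) volume := by norm_num
    _ ≤ C0 * eLpNorm (fderiv ℝ φ) p volume := key
    _ = C0 * eLpNorm (fderiv ℝ φ) p (volume.restrict Ω) := by
        rw [eLpNorm_restrict_eq_of_support_subset (ε := (Fin N → ℝ) →L[ℝ] ℝ)
          ((support_fderiv_subset ℝ).trans hsupp)]
    _ ≤ C0 * (eLpNorm (fderiv ℝ φ) 2 (volume.restrict Ω) * (volume.restrict Ω univ) ^ e) := by
        gcongr
        exact eLpNorm_le_eLpNorm_mul_rpow_measure_univ hptwo hcfd.aestronglyMeasurable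
    _ = C * eLpNorm (fderiv ℝ φ) 2 (volume.restrict Ω) := by
        rw [Measure.restrict_apply_univ, hC]
        ring
    _ ≤ C * ∑ i, eLpNorm (fun x => fderiv ℝ φ x (Pi.single i 1)) 2 (volume.restrict Ω) := by
        gcongr

-- Poincaré: zero weak gradient implies zero function
lemma MemW120.eq_zero_of_grad_zero {N : ℕ} (hN : 2 ≤ N) {Ω : Set (Fin N → ℝ)}
    (hΩb : Bornology.IsBounded Ω) {u : (Fin N → ℝ) → ℝ} {gu : (Fin N → ℝ) → Fin N → ℝ}
    (h : MemW120 Ω u gu) (hg : ∀ i, (fun x => gu x i) =ᵐ[volume.restrict Ω] 0) :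
    u =ᵐ[volume.restrict Ω] 0 := by
  obtain ⟨C, hC, hP⟩ := poincare_const hN Ω hΩb
  obtain ⟨⟨hu2, hgu2, _⟩, φ, hφ, hconv, hgconv⟩ := h
  set μ := volume.restrict Ω
  have hbound : ∀ k, eLpNorm u 2 μ ≤
      eLpNorm (fun x => φ k x - u x) 2 μ +
        C * ∑ i, eLpNorm (fun x => fderiv ℝ (φ k) x (Pi.single i 1) - gu x i) 2 μ := by
    intro k
    have hsplit : u = (fun x => u x - φ k x) + (fun x => φ k x) := by
      funext x; simp
    have haesm1 : AEStronglyMeasurable (fun x => u x - φ k x) μ :=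
      hu2.aestronglyMeasurable.sub (hφ k).1.continuous.aestronglyMeasurable
    calc eLpNorm u 2 μ
        ≤ eLpNorm (fun x => u x - φ k x) 2 μ + eLpNorm (fun x => φ k x) 2 μ := by
          conv_lhs => rw [hsplit]
          exact eLpNorm_add_le haesm1 (hφ k).1.continuous.aestronglyMeasurable (by norm_num)
      _ ≤ eLpNorm (fun x => φ k x - u x) 2 μ +
          C * ∑ i, eLpNorm (fun x => fderiv ℝ (φ k) x (Pi.single i 1) - gu x i) 2 μ := by
          gcongr
          · exact le_of_eq (eLpNorm_sub_comm _ _ _ _)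
          · refine (hP (φ k) (hφ k)).trans ?_
            gcongr with i _
            refine le_of_eq (eLpNorm_congr_ae ?_)
            filter_upwards [hg i] with x hx
            simp [hx]
  have htend : Tendsto (fun k => eLpNorm (fun x => φ k x - u x) 2 μ +
      C * ∑ i, eLpNorm (fun x => fderiv ℝ (φ k) x (Pi.single i 1) - gu x i) 2 μ)
      atTop (𝓝 0) := by
    have h1 : Tendsto (fun k => C * ∑ i : Fin N,
        eLpNorm (fun x => fderiv ℝ (φ k) x (Pi.single i 1) - gu x i) 2 μ) atTop (𝓝 0) := by
      have hs : Tendsto (fun k => ∑ i : Fin N,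
          eLpNorm (fun x => fderiv ℝ (φ k) x (Pi.single i 1) - gu x i) 2 μ) atTop
          (𝓝 (∑ _i : Fin N, 0)) :=
        tendsto_finset_sum _ (fun i _ => hgconv i)
      rw [Finset.sum_const, smul_zero] at hs
      have := ENNReal.Tendsto.const_mul hs (Or.inr hC)
      simpa using this
    have := Tendsto.add hconv h1
    simpa using this
  have : eLpNorm u 2 μ ≤ 0 := ge_of_tendsto' htend hbound
  have h0 : eLpNorm u 2 μ = 0 := le_antisymm this zero_le
  exact (eLpNorm_eq_zero_iff hu2.aestronglyMeasurable (by norm_num)).mp h0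

section Ell
variable {N : ℕ} {Ω : Set (Fin N → ℝ)} {A : (Fin N → ℝ) → Matrix (Fin N) (Fin N) ℝ} {α β : ℝ}

lemma aesm_B (hA : ∀ i j, Measurable fun x => A x i j)
    {g h : (Fin N → ℝ) → Fin N → ℝ}
    (hg : ∀ i, AEStronglyMeasurable (fun x => g x i) (volume.restrict Ω))
    (hh : ∀ i, AEStronglyMeasurable (fun x => h x i) (volume.restrict Ω)) :
    AEStronglyMeasurable (fun x => ∑ i, ∑ j, A x i j * g x j * h x i) (volume.restrict Ω) := by
  refine Finset.aestronglyMeasurable_fun_sum _ (fun i _ => ?_)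
  refine Finset.aestronglyMeasurable_fun_sum _ (fun j _ => ?_)
  exact ((hA i j).aestronglyMeasurable.mul (hg j)).mul (hh i)

lemma integrable_sq_sum {g : (Fin N → ℝ) → Fin N → ℝ}
    (hg : ∀ i, MemLp (fun x => g x i) 2 (volume.restrict Ω)) :
    Integrable (fun x => ∑ i, g x i ^ 2) (volume.restrict Ω) :=
  integrable_finset_sum _ (fun i _ => (hg i).integrable_sq)

lemma ae_quad_bounds (hA : Elliptic Ω A α β) {g : (Fin N → ℝ) → Fin N → ℝ} :
    ∀ᵐ x ∂(volume.restrict Ω),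
      α * ∑ i, g x i ^ 2 ≤ ∑ i, ∑ j, A x i j * g x j * g x i ∧
      ∑ i, ∑ j, A x i j * g x j * g x i ≤ β * ∑ i, g x i ^ 2 := by
  filter_upwards [hA.2] with x hx
  have hswap : ∑ i, ∑ j, A x i j * g x j * g x i = ∑ i, ∑ j, A x i j * g x i * g x j :=
    Finset.sum_congr rfl fun i _ => Finset.sum_congr rfl fun j _ => by ring
  rw [hswap]
  exact hx (g x)

lemma integrable_B_diag (hA : Elliptic Ω A α β) (hα : 0 < α) (hβ : α ≤ β)
    {g : (Fin N → ℝ) → Fin N → ℝ}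
    (hg : ∀ i, MemLp (fun x => g x i) 2 (volume.restrict Ω)) :
    Integrable (fun x => ∑ i, ∑ j, A x i j * g x j * g x i) (volume.restrict Ω) := by
  refine Integrable.mono' ((integrable_sq_sum hg).const_mul β)
    (aesm_B hA.1 (fun i => (hg i).aestronglyMeasurable) (fun i => (hg i).aestronglyMeasurable))
    ?_
  filter_upwards [ae_quad_bounds (g := g) hA] with x hx
  have h0 : (0:ℝ) ≤ ∑ i, g x i ^ 2 := Finset.sum_nonneg fun i _ => sq_nonneg _
  rw [Real.norm_eq_abs, abs_le]
  constructor
  · nlinarith [hx.1]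
  · exact hx.2

lemma le_integral_B_diag (hA : Elliptic Ω A α β) (hα : 0 < α) (hβ : α ≤ β)
    {g : (Fin N → ℝ) → Fin N → ℝ}
    (hg : ∀ i, MemLp (fun x => g x i) 2 (volume.restrict Ω)) :
    α * ∫ x in Ω, ∑ i, g x i ^ 2 ≤ ∫ x in Ω, ∑ i, ∑ j, A x i j * g x j * g x i := by
  rw [← integral_const_mul]
  refine integral_mono_ae ((integrable_sq_sum hg).const_mul α) (integrable_B_diag hA hα hβ hg) ?_
  filter_upwards [ae_quad_bounds (g := g) hA] with x hx
  exact hx.1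

lemma integrable_B_polar (hA : Elliptic Ω A α β) (hα : 0 < α) (hβ : α ≤ β)
    {g h : (Fin N → ℝ) → Fin N → ℝ}
    (hg : ∀ i, MemLp (fun x => g x i) 2 (volume.restrict Ω))
    (hh : ∀ i, MemLp (fun x => h x i) 2 (volume.restrict Ω)) :
    Integrable (fun x => (∑ i, ∑ j, A x i j * g x j * h x i)
      + ∑ i, ∑ j, A x i j * h x j * g x i) (volume.restrict Ω) := by
  have hgh : ∀ i, MemLp (fun x => g x i + h x i) 2 (volume.restrict Ω) :=
    fun i => (hg i).add (hh i)
  have hkey : (fun x => (∑ i, ∑ j, A x i j * g x j * h x i)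
      + ∑ i, ∑ j, A x i j * h x j * g x i)
      = (fun x => (∑ i, ∑ j, A x i j * (g x j + h x j) * (g x i + h x i))
        - ((∑ i, ∑ j, A x i j * g x j * g x i) + (∑ i, ∑ j, A x i j * h x j * h x i))) := by
    funext x
    rw [← Finset.sum_add_distrib, ← Finset.sum_add_distrib, ← Finset.sum_sub_distrib]
    refine Finset.sum_congr rfl fun i _ => ?_
    rw [← Finset.sum_add_distrib, ← Finset.sum_add_distrib, ← Finset.sum_sub_distrib]
    refine Finset.sum_congr rfl fun j _ => by ring
  rw [hkey]
  exact ((integrable_B_diag hA hα hβ hgh).sub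
    ((integrable_B_diag hA hα hβ hg).add (integrable_B_diag hA hα hβ hh)))

end Ell

end Helpers

/-- uniqueness of the energy solution of the singular
Schrödinger–Maxwell system for `γ ∈ (0,1]` and `r ≥ 1`. -/
theorem uniqueness_energy_solution {N : ℕ} (hN : 2 ≤ N)
    (Ω : Set (Fin N → ℝ)) (hΩo : IsOpen Ω) (hΩb : Bornology.IsBounded Ω)
    (A M : (Fin N → ℝ) → Matrix (Fin N) (Fin N) ℝ) (α β : ℝ)
    (hα : 0 < α) (hαβ : α ≤ β) (hA : Elliptic Ω A α β) (hM : Elliptic Ω M α β)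
    (γ r : ℝ) (hγ0 : 0 < γ) (hγ1 : γ ≤ 1) (hr : 1 ≤ r)
    (u₁ gu₁ v₁ gv₁ u₂ gu₂ v₂ gv₂ : _)
    (h₁ : IsEnergySolution Ω A M γ r u₁ gu₁ v₁ gv₁)
    (h₂ : IsEnergySolution Ω A M γ r u₂ gu₂ v₂ gv₂) :
    u₁ =ᵐ[volume.restrict Ω] u₂ ∧ v₁ =ᵐ[volume.restrict Ω] v₂ := by
  classical
  haveI := isFiniteMeasure_restrict_of_isBounded hΩb
  obtain ⟨hW1u, hW1v, hu1L, hv1L, hu1pos, hv1pos, hsing1, heq1, heqM1⟩ := h₁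
  obtain ⟨hW2u, hW2v, hu2L, hv2L, hu2pos, hv2pos, hsing2, heq2, heqM2⟩ := h₂
  have finish_false : (∀ᵐ x ∂(volume.restrict Ω), False) →
      (u₁ =ᵐ[volume.restrict Ω] u₂ ∧ v₁ =ᵐ[volume.restrict Ω] v₂) := fun hf =>
    ⟨hf.mono fun x hx => hx.elim, hf.mono fun x hx => hx.elim⟩
  have hWw : MemW120 Ω (fun x => u₁ x - u₂ x) (fun x i => gu₁ x i - gu₂ x i) :=
    MemW120.sub hΩb hW1u hW2u
  have hWz : MemW120 Ω (fun x => v₁ x - v₂ x) (fun x i => gv₁ x i - gv₂ x i) :=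
    MemW120.sub hΩb hW1v hW2v
  have hgu1 : ∀ i, MemLp (fun x => gu₁ x i) 2 (volume.restrict Ω) := hW1u.1.2.1
  have hgu2 : ∀ i, MemLp (fun x => gu₂ x i) 2 (volume.restrict Ω) := hW2u.1.2.1
  have hgv1 : ∀ i, MemLp (fun x => gv₁ x i) 2 (volume.restrict Ω) := hW1v.1.2.1
  have hgv2 : ∀ i, MemLp (fun x => gv₂ x i) 2 (volume.restrict Ω) := hW2v.1.2.1
  have hgw : ∀ i, MemLp (fun x => gu₁ x i - gu₂ x i) 2 (volume.restrict Ω) :=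
    fun i => ((hgu1 i).sub (hgu2 i))
  have hgz : ∀ i, MemLp (fun x => gv₁ x i - gv₂ x i) 2 (volume.restrict Ω) :=
    fun i => ((hgv1 i).sub (hgv2 i))
  have hr0 : (0:ℝ) ≤ r := by linarith
  have hr1' : (0:ℝ) ≤ r - 1 := by linarith
  have hrpos : (0:ℝ) < r := by linarith
  -- L^∞ memberships
  have hu1r : MemLp (fun x => u₁ x ^ r) ⊤ (volume.restrict Ω) := memℒp_top_rpow hr0 hu1L hu1pos
  have hu2r : MemLp (fun x => u₂ x ^ r) ⊤ (volume.restrict Ω) := memℒp_top_rpow hr0 hu2L hu2pos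
  have hu1r1 : MemLp (fun x => u₁ x ^ (r-1)) ⊤ (volume.restrict Ω) :=
    memℒp_top_rpow hr1' hu1L hu1pos
  have hu2r1 : MemLp (fun x => u₂ x ^ (r-1)) ⊤ (volume.restrict Ω) :=
    memℒp_top_rpow hr1' hu2L hu2pos
  -- integrability of zero-order terms
  have hP11 : Integrable (fun x => v₁ x * u₁ x ^ (r-1) * u₁ x) (volume.restrict Ω) :=
    (memℒp_top_mul (memℒp_top_mul hv1L hu1r1) hu1L).integrable le_top
  have hP12 : Integrable (fun x => v₁ x * u₁ x ^ (r-1) * u₂ x) (volume.restrict Ω) :=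
    (memℒp_top_mul (memℒp_top_mul hv1L hu1r1) hu2L).integrable le_top
  have hP21 : Integrable (fun x => v₂ x * u₂ x ^ (r-1) * u₁ x) (volume.restrict Ω) :=
    (memℒp_top_mul (memℒp_top_mul hv2L hu2r1) hu1L).integrable le_top
  have hP22 : Integrable (fun x => v₂ x * u₂ x ^ (r-1) * u₂ x) (volume.restrict Ω) :=
    (memℒp_top_mul (memℒp_top_mul hv2L hu2r1) hu2L).integrable le_top
  have hR11 : Integrable (fun x => u₁ x ^ r * v₁ x) (volume.restrict Ω) :=
    (memℒp_top_mul hu1r hv1L).integrable le_top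
  have hR12 : Integrable (fun x => u₁ x ^ r * v₂ x) (volume.restrict Ω) :=
    (memℒp_top_mul hu1r hv2L).integrable le_top
  have hR21 : Integrable (fun x => u₂ x ^ r * v₁ x) (volume.restrict Ω) :=
    (memℒp_top_mul hu2r hv1L).integrable le_top
  have hR22 : Integrable (fun x => u₂ x ^ r * v₂ x) (volume.restrict Ω) :=
    (memℒp_top_mul hu2r hv2L).integrable le_top
  have hQ11 : Integrable (fun x => u₁ x / u₁ x ^ γ) (volume.restrict Ω) := hsing1 u₁ gu₁ hW1u
  have hQ12 : Integrable (fun x => u₂ x / u₁ x ^ γ) (volume.restrict Ω) := hsing1 u₂ gu₂ hW2u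
  have hQ21 : Integrable (fun x => u₁ x / u₂ x ^ γ) (volume.restrict Ω) := hsing2 u₁ gu₁ hW1u
  have hQ22 : Integrable (fun x => u₂ x / u₂ x ^ γ) (volume.restrict Ω) := hsing2 u₂ gu₂ hW2u
  have hQ1w : Integrable (fun x => (u₁ x - u₂ x) / u₁ x ^ γ) (volume.restrict Ω) :=
    hsing1 _ _ hWw
  have hQ2w : Integrable (fun x => (u₁ x - u₂ x) / u₂ x ^ γ) (volume.restrict Ω) :=
    hsing2 _ _ hWw
  -- integrability of gradient terms
  have hd11 : Integrable (fun x => ∑ i, ∑ j, A x i j * gu₁ x j * gu₁ x i) (volume.restrict Ω) :=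
    integrable_B_diag hA hα hαβ hgu1
  have hd22 : Integrable (fun x => ∑ i, ∑ j, A x i j * gu₂ x j * gu₂ x i) (volume.restrict Ω) :=
    integrable_B_diag hA hα hαβ hgu2
  have hm11 : Integrable (fun x => ∑ i, ∑ j, M x i j * gv₁ x j * gv₁ x i) (volume.restrict Ω) :=
    integrable_B_diag hM hα hαβ hgv1
  have hm22 : Integrable (fun x => ∑ i, ∑ j, M x i j * gv₂ x j * gv₂ x i) (volume.restrict Ω) :=
    integrable_B_diag hM hα hαβ hgv2
  have hpolA : Integrable (fun x => (∑ i, ∑ j, A x i j * gu₁ x j * gu₂ x i)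
      + ∑ i, ∑ j, A x i j * gu₂ x j * gu₁ x i) (volume.restrict Ω) :=
    integrable_B_polar hA hα hαβ hgu1 hgu2
  have hpolM : Integrable (fun x => (∑ i, ∑ j, M x i j * gv₁ x j * gv₂ x i)
      + ∑ i, ∑ j, M x i j * gv₂ x j * gv₁ x i) (volume.restrict Ω) :=
    integrable_B_polar hM hα hαβ hgv1 hgv2
  -- pointwise splitting lemmas
  have hsplitR : ∀ (B : (Fin N → ℝ) → Matrix (Fin N) (Fin N) ℝ)
      (g h k : (Fin N → ℝ) → Fin N → ℝ) (x : Fin N → ℝ),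
      ∑ i, ∑ j, B x i j * g x j * (h x i - k x i)
        = (∑ i, ∑ j, B x i j * g x j * h x i) - ∑ i, ∑ j, B x i j * g x j * k x i := by
    intro B g h k x
    rw [← Finset.sum_sub_distrib]
    refine Finset.sum_congr rfl fun i _ => ?_
    rw [← Finset.sum_sub_distrib]
    exact Finset.sum_congr rfl fun j _ => by ring
  have hsplitL : ∀ (B : (Fin N → ℝ) → Matrix (Fin N) (Fin N) ℝ)
      (g h k : (Fin N → ℝ) → Fin N → ℝ) (x : Fin N → ℝ),
      ∑ i, ∑ j, B x i j * (g x j - h x j) * k x i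
        = (∑ i, ∑ j, B x i j * g x j * k x i) - ∑ i, ∑ j, B x i j * h x j * k x i := by
    intro B g h k x
    rw [← Finset.sum_sub_distrib]
    refine Finset.sum_congr rfl fun i _ => ?_
    rw [← Finset.sum_sub_distrib]
    exact Finset.sum_congr rfl fun j _ => by ring
  have hsplitQ : ∀ (B : (Fin N → ℝ) → Matrix (Fin N) (Fin N) ℝ)
      (g h : (Fin N → ℝ) → Fin N → ℝ) (x : Fin N → ℝ),
      ∑ i, ∑ j, B x i j * (g x j - h x j) * (g x i - h x i)
        = (∑ i, ∑ j, B x i j * g x j * (g x i - h x i))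
          - ∑ i, ∑ j, B x i j * h x j * (g x i - h x i) := by
    intro B g h x
    rw [← Finset.sum_sub_distrib]
    refine Finset.sum_congr rfl fun i _ => ?_
    rw [← Finset.sum_sub_distrib]
    exact Finset.sum_congr rfl fun j _ => by ring
  -- equations instances
  have E1u1 := heq1 u₁ gu₁ hW1u
  have E1u2 := heq1 u₂ gu₂ hW2u
  have E2u1 := heq2 u₁ gu₁ hW1u
  have E2u2 := heq2 u₂ gu₂ hW2u
  have E1w : (∫ x in Ω, ∑ i, ∑ j, A x i j * gu₁ x j * (gu₁ x i - gu₂ x i)) +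
      (∫ x in Ω, v₁ x * u₁ x ^ (r - 1) * (u₁ x - u₂ x)) =
      ∫ x in Ω, (u₁ x - u₂ x) / u₁ x ^ γ := heq1 _ _ hWw
  have E2w : (∫ x in Ω, ∑ i, ∑ j, A x i j * gu₂ x j * (gu₁ x i - gu₂ x i)) +
      (∫ x in Ω, v₂ x * u₂ x ^ (r - 1) * (u₁ x - u₂ x)) =
      ∫ x in Ω, (u₁ x - u₂ x) / u₂ x ^ γ := heq2 _ _ hWw
  have M1v2 : (∫ x in Ω, ∑ i, ∑ j, M x i j * gv₁ x j * gv₂ x i) =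
      ∫ x in Ω, u₁ x ^ r * v₂ x := heqM1 v₂ gv₂ hW2v
  have M1z : (∫ x in Ω, ∑ i, ∑ j, M x i j * gv₁ x j * (gv₁ x i - gv₂ x i)) =
      ∫ x in Ω, u₁ x ^ r * (v₁ x - v₂ x) := heqM1 _ _ hWz
  have M2z : (∫ x in Ω, ∑ i, ∑ j, M x i j * gv₂ x j * (gv₁ x i - gv₂ x i)) =
      ∫ x in Ω, u₂ x ^ r * (v₁ x - v₂ x) := heqM2 _ _ hWz
  -- helper: zero gradient squared integral forces the function to vanish
  have grad_zero_of : ∀ (f : (Fin N → ℝ) → ℝ) (gf : (Fin N → ℝ) → Fin N → ℝ),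
      MemW120 Ω f gf → (∫ x in Ω, ∑ i, gf x i ^ 2) ≤ 0 → f =ᵐ[volume.restrict Ω] 0 := by
    intro f gf hW hle
    have hnn : 0 ≤ᵐ[volume.restrict Ω] (fun x => ∑ i, gf x i ^ 2) :=
      Eventually.of_forall fun x => Finset.sum_nonneg fun i _ => sq_nonneg _
    have hint := integrable_sq_sum (Ω := Ω) hW.1.2.1
    have h0 : (∫ x in Ω, ∑ i, gf x i ^ 2) = 0 :=
      le_antisymm hle (integral_nonneg fun x => Finset.sum_nonneg fun i _ => sq_nonneg _)
    have hae := (integral_eq_zero_iff_of_nonneg_ae hnn hint).mp h0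
    refine MemW120.eq_zero_of_grad_zero hN hΩb hW ?_
    intro i
    filter_upwards [hae] with x hx
    simp only [Pi.zero_apply] at hx ⊢
    have := (Finset.sum_eq_zero_iff_of_nonneg (fun j _ => sq_nonneg (gf x j))).mp hx i
      (Finset.mem_univ i)
    exact (pow_eq_zero_iff two_ne_zero).mp this
  -- case analysis on integrability of the Maxwell cross term
  by_cases hf12 : Integrable (fun x => ∑ i, ∑ j, M x i j * gv₁ x j * gv₂ x i) (volume.restrict Ω)
  swap
  · -- bad Maxwell case: contradiction with positivity
    rw [integral_undef hf12] at M1v2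
    have hppos : ∀ᵐ x ∂(volume.restrict Ω), 0 < u₁ x ^ r * v₂ x := by
      filter_upwards [hu1pos, hv2pos] with x h1 h2
      exact mul_pos (Real.rpow_pos_of_pos h1 r) h2
    have h0 : (fun x => u₁ x ^ r * v₂ x) =ᵐ[volume.restrict Ω] 0 :=
      (integral_eq_zero_iff_of_nonneg_ae (hppos.mono fun x hx => hx.le) hR12).mp M1v2.symm
    refine finish_false ?_
    filter_upwards [h0, hppos] with x h1 h2
    rw [Pi.zero_apply] at h1
    exact absurd h1 (ne_of_gt h2)
  -- good Maxwell case
  have hf21 : Integrable (fun x => ∑ i, ∑ j, M x i j * gv₂ x j * gv₁ x i) (volume.restrict Ω) :=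
    (hpolM.sub hf12).congr (Eventually.of_forall fun x => by simp only [Pi.sub_apply]; ring)
  -- the Maxwell quadratic identity
  have hMleft : (∫ x in Ω, ∑ i, ∑ j, M x i j *
        (gv₁ x j - gv₂ x j) * (gv₁ x i - gv₂ x i)) =
      (∫ x in Ω, u₁ x ^ r * (v₁ x - v₂ x)) - ∫ x in Ω, u₂ x ^ r * (v₁ x - v₂ x) := by
    have hI1 : Integrable (fun x => (∑ i, ∑ j, M x i j * gv₁ x j * (gv₁ x i - gv₂ x i))) 
        (volume.restrict Ω) := by
      refine (hm11.sub hf12).congr (Eventually.of_forall fun x => ?_)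
      simp only [Pi.sub_apply]
      rw [hsplitR M gv₁ gv₁ gv₂ x]
    have hI2 : Integrable (fun x => (∑ i, ∑ j, M x i j * gv₂ x j * (gv₁ x i - gv₂ x i))) 
        (volume.restrict Ω) := by
      refine (hf21.sub hm22).congr (Eventually.of_forall fun x => ?_)
      simp only [Pi.sub_apply]
      rw [hsplitR M gv₂ gv₁ gv₂ x]
    calc (∫ x in Ω, ∑ i, ∑ j, M x i j * (gv₁ x j - gv₂ x j) * (gv₁ x i - gv₂ x i))
        = ∫ x in Ω, ((∑ i, ∑ j, M x i j * gv₁ x j * (gv₁ x i - gv₂ x i))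
            - ∑ i, ∑ j, M x i j * gv₂ x j * (gv₁ x i - gv₂ x i)) := by
          refine integral_congr_ae (Eventually.of_forall fun x => ?_)
          simp only [hsplitQ]
      _ = (∫ x in Ω, ∑ i, ∑ j, M x i j * gv₁ x j * (gv₁ x i - gv₂ x i))
          - ∫ x in Ω, ∑ i, ∑ j, M x i j * gv₂ x j * (gv₁ x i - gv₂ x i) :=
          integral_sub hI1 hI2
      _ = (∫ x in Ω, u₁ x ^ r * (v₁ x - v₂ x)) - ∫ x in Ω, u₂ x ^ r * (v₁ x - v₂ x) := by
          rw [M1z, M2z]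
  have hMquad_nonneg : 0 ≤ ∫ x in Ω, ∑ i, ∑ j, M x i j *
      (gv₁ x j - gv₂ x j) * (gv₁ x i - gv₂ x i) := by
    have h1 := le_integral_B_diag hM hα hαβ hgz
    have h2 : 0 ≤ ∫ x in Ω, ∑ i, (gv₁ x i - gv₂ x i) ^ 2 :=
      integral_nonneg fun x => Finset.sum_nonneg fun i _ => sq_nonneg _
    have h3 := mul_nonneg hα.le h2
    linarith
  -- now the u-equation case analysis
  by_cases hc12 : Integrable (fun x => ∑ i, ∑ j, A x i j * gu₁ x j * gu₂ x i) (volume.restrict Ω)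
  swap
  · -- bad A case : forces ∫ d11 = 0 and hence u₁ = 0 a.e., contradiction
    have hnI : ¬ Integrable (fun x => ∑ i, ∑ j, A x i j * gu₁ x j * (gu₁ x i - gu₂ x i))
        (volume.restrict Ω) := by
      intro h
      refine hc12 ((hd11.sub h).congr (Eventually.of_forall fun x => ?_))
      simp only [Pi.sub_apply]
      rw [hsplitR A gu₁ gu₁ gu₂ x]
      ring
    rw [integral_undef hnI] at E1w
    rw [integral_undef hc12] at E1u2
    have hQsplit : (∫ x in Ω, (u₁ x - u₂ x) / u₁ x ^ γ)
        = (∫ x in Ω, u₁ x / u₁ x ^ γ) - ∫ x in Ω, u₂ x / u₁ x ^ γ := by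
      rw [← integral_sub hQ11 hQ12]
      exact integral_congr_ae (Eventually.of_forall fun x => sub_div _ _ _)
    have hPsplit : (∫ x in Ω, v₁ x * u₁ x ^ (r - 1) * (u₁ x - u₂ x))
        = (∫ x in Ω, v₁ x * u₁ x ^ (r-1) * u₁ x) - ∫ x in Ω, v₁ x * u₁ x ^ (r-1) * u₂ x := by
      rw [← integral_sub hP11 hP12]
      exact integral_congr_ae (Eventually.of_forall fun x => by ring)
    have hd11_zero : (∫ x in Ω, ∑ i, ∑ j, A x i j * gu₁ x j * gu₁ x i) = 0 := by
      rw [hQsplit, hPsplit] at E1w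
      linarith [E1u1, E1u2, E1w]
    have hu1zero : u₁ =ᵐ[volume.restrict Ω] 0 := by
      refine grad_zero_of u₁ gu₁ hW1u ?_
      have h1 := le_integral_B_diag hA hα hαβ hgu1
      have h2 : 0 ≤ ∫ x in Ω, ∑ i, gu₁ x i ^ 2 :=
        integral_nonneg fun x => Finset.sum_nonneg fun i _ => sq_nonneg _
      have h3 := mul_nonneg hα.le h2
      rw [hd11_zero] at h1
      have h4 : α * ∫ x in Ω, ∑ i, gu₁ x i ^ 2 = 0 := le_antisymm h1 h3
      have h5 : (∫ x in Ω, ∑ i, gu₁ x i ^ 2) = 0 := by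
        rcases mul_eq_zero.mp h4 with h | h
        · exact absurd h hα.ne'
        · exact h
      linarith
    refine finish_false ?_
    filter_upwards [hu1zero, hu1pos] with x h1 h2
    rw [Pi.zero_apply] at h1
    exact absurd h1 (ne_of_gt h2)
  -- good case for both
  have hc21 : Integrable (fun x => ∑ i, ∑ j, A x i j * gu₂ x j * gu₁ x i) (volume.restrict Ω) :=
    (hpolA.sub hc12).congr (Eventually.of_forall fun x => by simp only [Pi.sub_apply]; ring)
  have hA1w : Integrable (fun x => (∑ i, ∑ j, A x i j * gu₁ x j * (gu₁ x i - gu₂ x i)))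
      (volume.restrict Ω) := by
    refine (hd11.sub hc12).congr (Eventually.of_forall fun x => ?_)
    simp only [Pi.sub_apply]
    rw [hsplitR A gu₁ gu₁ gu₂ x]
  have hA2w : Integrable (fun x => (∑ i, ∑ j, A x i j * gu₂ x j * (gu₁ x i - gu₂ x i)))
      (volume.restrict Ω) := by
    refine (hc21.sub hd22).congr (Eventually.of_forall fun x => ?_)
    simp only [Pi.sub_apply]
    rw [hsplitR A gu₂ gu₁ gu₂ x]
  have hXw : (∫ x in Ω, ∑ i, ∑ j, A x i j * (gu₁ x j - gu₂ x j) * (gu₁ x i - gu₂ x i))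
      = (∫ x in Ω, ∑ i, ∑ j, A x i j * gu₁ x j * (gu₁ x i - gu₂ x i))
        - ∫ x in Ω, ∑ i, ∑ j, A x i j * gu₂ x j * (gu₁ x i - gu₂ x i) := by
    rw [← integral_sub hA1w hA2w]
    refine integral_congr_ae (Eventually.of_forall fun x => ?_)
    simp only [hsplitQ]
  -- the Q-term is nonpositive
  have hQdiff : (∫ x in Ω, (u₁ x - u₂ x) / u₁ x ^ γ)
      - (∫ x in Ω, (u₁ x - u₂ x) / u₂ x ^ γ) ≤ 0 := by
    rw [← integral_sub hQ1w hQ2w]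
    refine integral_nonpos_of_ae ?_
    filter_upwards [hu1pos, hu2pos] with x h1 h2
    exact sing_mono h1 h2 hγ0
  -- the P-term dominates (1/r) Z
  have hZint : Integrable (fun x => (v₁ x - v₂ x) * (u₁ x ^ r - u₂ x ^ r))
      (volume.restrict Ω) :=
    ((hR11.sub hR12).sub (hR21.sub hR22)).congr (Eventually.of_forall fun x => by simp only [Pi.sub_apply]; ring)
  have hP1w : Integrable (fun x => v₁ x * u₁ x ^ (r - 1) * (u₁ x - u₂ x))
      (volume.restrict Ω) :=
    (hP11.sub hP12).congr (Eventually.of_forall fun x => by simp only [Pi.sub_apply]; ring)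
  have hP2w : Integrable (fun x => v₂ x * u₂ x ^ (r - 1) * (u₁ x - u₂ x))
      (volume.restrict Ω) :=
    (hP21.sub hP22).congr (Eventually.of_forall fun x => by simp only [Pi.sub_apply]; ring)
  have hPdiff : (1/r) * (∫ x in Ω, (v₁ x - v₂ x) * (u₁ x ^ r - u₂ x ^ r)) ≤
      (∫ x in Ω, v₁ x * u₁ x ^ (r - 1) * (u₁ x - u₂ x))
        - ∫ x in Ω, v₂ x * u₂ x ^ (r - 1) * (u₁ x - u₂ x) := by
    rw [← integral_sub hP1w hP2w, ← integral_const_mul]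
    refine integral_mono_ae (hZint.const_mul _) (hP1w.sub hP2w) ?_
    filter_upwards [hu1pos, hu2pos, hv1pos, hv2pos] with x h1 h2 h3 h4
    exact key_ineq h1 h2 hr h3.le h4.le
  -- Z is nonnegative
  have hZval : (∫ x in Ω, (v₁ x - v₂ x) * (u₁ x ^ r - u₂ x ^ r))
      = (∫ x in Ω, u₁ x ^ r * (v₁ x - v₂ x)) - ∫ x in Ω, u₂ x ^ r * (v₁ x - v₂ x) := by
    have hz1 : Integrable (fun x => u₁ x ^ r * (v₁ x - v₂ x)) (volume.restrict Ω) :=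
      (hR11.sub hR12).congr (Eventually.of_forall fun x => by simp only [Pi.sub_apply]; ring)
    have hz2 : Integrable (fun x => u₂ x ^ r * (v₁ x - v₂ x)) (volume.restrict Ω) :=
      (hR21.sub hR22).congr (Eventually.of_forall fun x => by simp only [Pi.sub_apply]; ring)
    rw [← integral_sub hz1 hz2]
    exact integral_congr_ae (Eventually.of_forall fun x => by ring)
  have hZnn : 0 ≤ ∫ x in Ω, (v₁ x - v₂ x) * (u₁ x ^ r - u₂ x ^ r) := by
    rw [hZval, ← hMleft]
    exact hMquad_nonneg
  -- coercivity and conclusion for u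
  have hcoerc := le_integral_B_diag hA hα hαβ hgw
  have hsum_nonneg : 0 ≤ ∫ x in Ω, ∑ i, (gu₁ x i - gu₂ x i) ^ 2 :=
    integral_nonneg fun x => Finset.sum_nonneg fun i _ => sq_nonneg _
  have hrinv : 0 < 1/r := by positivity
  have hgw_zero : (∫ x in Ω, ∑ i, (gu₁ x i - gu₂ x i) ^ 2) ≤ 0 := by
    have hXle : (∫ x in Ω, ∑ i, ∑ j, A x i j * (gu₁ x j - gu₂ x j) * (gu₁ x i - gu₂ x i)) ≤ 0 := by
      rw [hXw]
      have := mul_nonneg hrinv.le hZnn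
      linarith [E1w, E2w, hQdiff, hPdiff]
    have hαI : α * (∫ x in Ω, ∑ i, (gu₁ x i - gu₂ x i) ^ 2) ≤ α * 0 := by
      rw [mul_zero]; exact le_trans hcoerc hXle
    exact le_of_mul_le_mul_left hαI hα
  have hw0 : (fun x => u₁ x - u₂ x) =ᵐ[volume.restrict Ω] 0 :=
    grad_zero_of _ _ hWw hgw_zero
  have hu : u₁ =ᵐ[volume.restrict Ω] u₂ := by
    filter_upwards [hw0] with x hx
    rw [Pi.zero_apply] at hx
    linarith
  refine ⟨hu, ?_⟩
  -- conclusion for v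
  have hMrhs : (∫ x in Ω, u₁ x ^ r * (v₁ x - v₂ x)) = ∫ x in Ω, u₂ x ^ r * (v₁ x - v₂ x) := by
    refine integral_congr_ae ?_
    filter_upwards [hu] with x hx
    rw [hx]
  have hgz_zero : (∫ x in Ω, ∑ i, (gv₁ x i - gv₂ x i) ^ 2) ≤ 0 := by
    have h1 := le_integral_B_diag hM hα hαβ hgz
    have h2 : (∫ x in Ω, ∑ i, ∑ j, M x i j * (gv₁ x j - gv₂ x j) * (gv₁ x i - gv₂ x i)) = 0 := by
      rw [hMleft, hMrhs, sub_self]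
    rw [h2] at h1
    have hαI : α * (∫ x in Ω, ∑ i, (gv₁ x i - gv₂ x i) ^ 2) ≤ α * 0 := by
      rw [mul_zero]; exact h1
    exact le_of_mul_le_mul_left hαI hα
  have hz0 : (fun x => v₁ x - v₂ x) =ᵐ[volume.restrict Ω] 0 :=
    grad_zero_of _ _ hWz hgz_zero
  filter_upwards [hz0] with x hx
  rw [Pi.zero_apply] at hx
  linarith
end
end

section
/- Let r ≥ 1 be a real number and let u, ũ, v, ṽ be nonnegative real numbers. Then (v u^{r−1} − ṽ ũ^{r−1})(u − ũ) ≥ (1/r)(u^r − ũ^r)(v − ṽ). -/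
/-! Multiplying by `r` and expanding, the difference of the two sides is
`v · D(u, ũ) + ṽ · D(ũ, u)` with `D(a, b) = (r - 1) a^r + b^r - r a^(r-1) b`, and `D ≥ 0` is
Young's inequality `a^(r-1) b ≤ ((r-1)/r) a^r + (1/r) b^r`, i.e. weighted AM-GM applied to
`a^r` and `b^r` with weights `1 - 1/r` and `1/r`. -/

namespace Real

variable {r a b : ℝ}

theorem rpow_sub_one_mul_self (hr : 1 ≤ r) (ha : 0 ≤ a) : a ^ (r - 1) * a = a ^ r := by
  conv_rhs => rw [← sub_add_cancel r 1, rpow_add' ha (by linarith), rpow_one]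

theorem mul_rpow_sub_one_mul_le (hr : 1 ≤ r) (ha : 0 ≤ a) (hb : 0 ≤ b) :
    r * (a ^ (r - 1) * b) ≤ (r - 1) * a ^ r + b ^ r := by
  have hr0 : r ≠ 0 := by positivity
  have amgm := geom_mean_le_arith_mean2_weighted (w₁ := 1 - 1 / r) (w₂ := 1 / r)
    (sub_nonneg.2 (div_le_one_of_le₀ hr (by positivity))) (by positivity)
    (rpow_nonneg ha r) (rpow_nonneg hb r) (sub_add_cancel 1 (1 / r))
  rw [← rpow_mul ha, ← rpow_mul hb, mul_one_div_cancel hr0, rpow_one,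
    show r * (1 - 1 / r) = r - 1 by field_simp] at amgm
  calc r * (a ^ (r - 1) * b) ≤ r * ((1 - 1 / r) * a ^ r + 1 / r * b ^ r) := by gcongr
    _ = (r - 1) * a ^ r + b ^ r := by field_simp

end Real

/-- for `r ≥ 1` and nonnegative reals `u, ũ, v, ṽ`,
`(v u^{r-1} - ṽ ũ^{r-1})(u - ũ) ≥ (1/r)(u^r - ũ^r)(v - ṽ)`
(real powers, with the convention `0^0 = 1`, which is `Real.rpow`'s). -/
theorem young_type_inequality (r u ut v vt : ℝ) (hr : 1 ≤ r)
    (hu : 0 ≤ u) (hut : 0 ≤ ut) (hv : 0 ≤ v) (hvt : 0 ≤ vt) :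
    (1 / r) * (u ^ r - ut ^ r) * (v - vt) ≤
      (v * u ^ (r - 1) - vt * ut ^ (r - 1)) * (u - ut) := by
  have hr0 : 0 < r := by positivity
  have young_u := Real.mul_rpow_sub_one_mul_le hr hu hut
  have young_ut := Real.mul_rpow_sub_one_mul_le hr hut hu
  have identity : r * ((v * u ^ (r - 1) - vt * ut ^ (r - 1)) * (u - ut))
      - (u ^ r - ut ^ r) * (v - vt)
      = v * ((r - 1) * u ^ r + ut ^ r - r * (u ^ (r - 1) * ut))
        + vt * ((r - 1) * ut ^ r + u ^ r - r * (ut ^ (r - 1) * u)) := by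
    rw [← Real.rpow_sub_one_mul_self hr hu, ← Real.rpow_sub_one_mul_self hr hut]
    ring
  rw [mul_assoc, one_div_mul_eq_div, div_le_iff₀' hr0]
  linarith [mul_nonneg hv (sub_nonneg.2 young_u), mul_nonneg hvt (sub_nonneg.2 young_ut)]
end
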